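/- Invertibility of (⟨a⟩L): for all nominals i,j, every modality a ∈ Mod, every node expression φ, and all finite sets Γ,Δ of node expressions of the admissible forms, if @_i⟨a⟩φ, Γ ⊢_G Δ then @_i⟨a⟩j, @_jφ, Γ ⊢_G Δ. -/
import Mathlib


namespace HXPathD

mutual
  inductive Path (P N M C : Type) : Type where
    | mod  : M → Path P N M C
    | nom  : N → Path P N M C
    | test : Node P N M C → Path P N M C
    | comp : Path P N M C → Path P N M C → Path P N M C

  inductive Node (P N M C : Type) : Type where
    | prop : P → Node P N M C
    | nom  : N → Node P N M C
    | bot  : Node P N M C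
    | impl : Node P N M C → Node P N M C → Node P N M C
    | at   : N → Node P N M C → Node P N M C
    | dia  : M → Node P N M C → Node P N M C
    | eq   : Path P N M C → C → Path P N M C → Node P N M C
    | neq  : Path P N M C → C → Path P N M C → Node P N M C
end

variable {P N M C : Type}

/-- Abbreviations. -/
def Node.neg (φ : Node P N M C) : Node P N M C := .impl φ .bot
def Node.top : Node P N M C := .impl .bot .bot
def Node.and (φ ψ : Node P N M C) : Node P N M C := .neg (.impl φ (.neg ψ))
def Node.iff (φ ψ : Node P N M C) : Node P N M C := .and (.impl φ ψ) (.impl ψ φ)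
def Node.box (a : M) (φ : Node P N M C) : Node P N M C := .neg (.dia a (.neg φ))
def Path.eps : Path P N M C := .test .top

/-- The node expression ⟨α⟩φ, obtained by the abbreviations
    ⟨j:⟩φ := @_jφ, ⟨ψ?⟩φ := ψ∧φ, ⟨αβ⟩φ := ⟨α⟩⟨β⟩φ (with ⟨a⟩φ primitive). -/
def Path.dia : Path P N M C → Node P N M C → Node P N M C
  | .mod a, φ => .dia a φ
  | .nom j, φ => .at j φ
  | .test ψ, φ => .and ψ φ
  | .comp α β, φ => α.dia (β.dia φ)

/-- A comparison ▲ ∈ {=_c, ≠_c : c ∈ Cmp}. -/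
inductive Comparison (C : Type) : Type where
  | ceq  : C → Comparison C
  | cneq : C → Comparison C

/-- The node expression ⟨α ▲ β⟩. -/
def Comparison.node : Comparison C → Path P N M C → Path P N M C → Node P N M C
  | .ceq c, α, β => .eq α c β
  | .cneq c, α, β => .neq α c β

/-- A hybrid data model. -/
structure Model (P N M C : Type) where
  W : Type
  nonempty : Nonempty W
  R : M → W → W → Prop
  E : C → W → W → Prop
  E_equiv : ∀ c, Equivalence (E c)
  g : N → W
  V : P → W → Prop

mutual
  def Model.satPath (𝔐 : Model P N M C) : Path P N M C → 𝔐.W → 𝔐.W → Prop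
    | .mod a, n, n' => 𝔐.R a n n'
    | .nom i, _, n' => 𝔐.g i = n'
    | .test φ, n, n' => n = n' ∧ 𝔐.sat φ n
    | .comp α β, n, n' => ∃ n'', 𝔐.satPath α n n'' ∧ 𝔐.satPath β n'' n'

  def Model.sat (𝔐 : Model P N M C) : Node P N M C → 𝔐.W → Prop
    | .prop p, n => 𝔐.V p n
    | .nom i, n => 𝔐.g i = n
    | .bot, _ => False
    | .impl φ ψ, n => 𝔐.sat φ n → 𝔐.sat ψ n
    | .at i φ, _ => 𝔐.sat φ (𝔐.g i)
    | .dia a φ, n => ∃ n', 𝔐.R a n n' ∧ 𝔐.sat φ n'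
    | .eq α c β, n => ∃ n' n'', 𝔐.satPath α n n' ∧ 𝔐.satPath β n n'' ∧ 𝔐.E c n' n''
    | .neq α c β, n => ∃ n' n'', 𝔐.satPath α n n' ∧ 𝔐.satPath β n n'' ∧ ¬ 𝔐.E c n' n''
end

mutual
  def Path.noms : Path P N M C → Set N
    | .mod _ => ∅
    | .nom i => {i}
    | .test φ => φ.noms
    | .comp α β => α.noms ∪ β.noms

  def Node.noms : Node P N M C → Set N
    | .prop _ => ∅
    | .nom i => {i}
    | .bot => ∅
    | .impl φ ψ => φ.noms ∪ ψ.noms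
    | .at i φ => insert i φ.noms
    | .dia _ φ => φ.noms
    | .eq α _ β => α.noms ∪ β.noms
    | .neq α _ β => α.noms ∪ β.noms
end

/-- Node expressions of the admissible forms for sequents:
    ⟨i: ▲ j:⟩ or @_iφ. -/
def Node.Admissible : Node P N M C → Prop
  | .at _ _ => True
  | .eq (.nom _) _ (.nom _) => True
  | .neq (.nom _) _ (.nom _) => True
  | _ => False

/-- A sequent: antecedent and consequent. -/
abbrev Sequent (P N M C : Type) := Set (Node P N M C) × Set (Node P N M C)

/-- The nominal `j` does not occur in the set `S`. -/
def FreshIn (j : N) (S : Set (Node P N M C)) : Prop := ∀ φ ∈ S, j ∉ φ.noms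

/-- Shape restriction on the axiom (Ax). -/
inductive AxForm : Node P N M C → Prop where
  | prop (i : N) (p : P) : AxForm (.at i (.prop p))
  | nom (i j : N) : AxForm (.at i (.nom j))
  | eq (i : N) (c : C) (j : N) : AxForm (.eq (.nom i) c (.nom j))

/-- Shape restriction on the rule (S1): φ is p, ⊥ or ⟨a⟩k. -/
inductive S1Form : Node P N M C → Prop where
  | prop (p : P) : S1Form (.prop p)
  | bot : S1Form .bot
  | dia (a : M) (k : N) : S1Form (.dia a (.nom k))

/-- One rule instance of the sequent calculus G: `Step cut prems concl` holds iff
    `concl` may be inferred from the premisses `prems` by a rule of G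
    (when `cut = false`, the rule (Cut) is excluded). -/
inductive Step (cut : Bool) : List (Sequent P N M C) → Sequent P N M C → Prop where
  | ax {Γ Δ : Set (Node P N M C)} {φ} (h : AxForm φ) :
      Step cut [] (insert φ Γ, insert φ Δ)
  | bot {Γ Δ : Set (Node P N M C)} (i : N) :
      Step cut [] (insert (.at i .bot) Γ, Δ)
  | implL {Γ Δ : Set (Node P N M C)} (i : N) (φ ψ : Node P N M C) :
      Step cut [(Γ, insert (.at i φ) Δ), (insert (.at i ψ) Γ, Δ)]
        (insert (.at i (.impl φ ψ)) Γ, Δ)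
  | implR {Γ Δ : Set (Node P N M C)} (i : N) (φ ψ : Node P N M C) :
      Step cut [(insert (.at i φ) Γ, insert (.at i ψ) Δ)]
        (Γ, insert (.at i (.impl φ ψ)) Δ)
  | atT {Γ Δ : Set (Node P N M C)} (i : N) :
      Step cut [(insert (.at i (.nom i)) Γ, Δ)] (Γ, Δ)
  | at5 {Γ Δ : Set (Node P N M C)} (i j k : N) :
      Step cut
        [(insert (.at j (.nom k)) (insert (.at i (.nom j)) (insert (.at i (.nom k)) Γ)), Δ)]
        (insert (.at i (.nom j)) (insert (.at i (.nom k)) Γ), Δ)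
  | nomRule {Γ Δ : Set (Node P N M C)} (i j : N)
      (hj : FreshIn j Γ) (hj' : FreshIn j Δ) :
      Step cut [(insert (.at i (.nom j)) Γ, Δ)] (Γ, Δ)
  | s1 {Γ Δ : Set (Node P N M C)} (i j : N) {φ : Node P N M C} (h : S1Form φ) :
      Step cut
        [(insert (.at j φ) (insert (.at i (.nom j)) (insert (.at i φ) Γ)), Δ)]
        (insert (.at i (.nom j)) (insert (.at i φ) Γ), Δ)
  | s2 {Γ Δ : Set (Node P N M C)} (i j k : N) (a : M) :
      Step cut
        [(insert (.at i (.dia a (.nom k)))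
            (insert (.at j (.nom k)) (insert (.at i (.dia a (.nom j))) Γ)), Δ)]
        (insert (.at j (.nom k)) (insert (.at i (.dia a (.nom j))) Γ), Δ)
  | s3 {Γ Δ : Set (Node P N M C)} (i j k : N) (c : C) :
      Step cut
        [(insert (.eq (.nom j) c (.nom k))
            (insert (.at i (.nom j)) (insert (.eq (.nom i) c (.nom k)) Γ)), Δ)]
        (insert (.at i (.nom j)) (insert (.eq (.nom i) c (.nom k)) Γ), Δ)
  | atL {Γ Δ : Set (Node P N M C)} (i j : N) (φ : Node P N M C) :
      Step cut [(insert (.at i φ) Γ, Δ)] (insert (.at j (.at i φ)) Γ, Δ)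
  | atR {Γ Δ : Set (Node P N M C)} (i j : N) (φ : Node P N M C) :
      Step cut [(Γ, insert (.at i φ) Δ)] (Γ, insert (.at j (.at i φ)) Δ)
  | diaL {Γ Δ : Set (Node P N M C)} (i j : N) (a : M) (φ : Node P N M C)
      (hj : FreshIn j (insert (.at i (.dia a φ)) Γ)) (hj' : FreshIn j Δ) :
      Step cut
        [(insert (.at i (.dia a (.nom j))) (insert (.at j φ) Γ), Δ)]
        (insert (.at i (.dia a φ)) Γ, Δ)
  | diaR {Γ Δ : Set (Node P N M C)} (i j : N) (a : M) (φ : Node P N M C) :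
      Step cut
        [(insert (.at i (.dia a (.nom j))) Γ,
          insert (.at i (.dia a φ)) (insert (.at j φ) Δ))]
        (insert (.at i (.dia a (.nom j))) Γ, insert (.at i (.dia a φ)) Δ)
  | cmpL {Γ Δ : Set (Node P N M C)} (i j k : N) (α β : Path P N M C)
      (b : Comparison C) (hjk : j ≠ k)
      (hj : FreshIn j (insert (.at i (b.node α β)) Γ)) (hj' : FreshIn j Δ)
      (hk : FreshIn k (insert (.at i (b.node α β)) Γ)) (hk' : FreshIn k Δ) :
      Step cut
        [(insert (.at i (α.dia (.nom j)))
            (insert (.at i (β.dia (.nom k)))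
              (insert (b.node (.nom j) (.nom k)) Γ)), Δ)]
        (insert (.at i (b.node α β)) Γ, Δ)
  | cmpR {Γ Δ : Set (Node P N M C)} (i j k : N) (α β : Path P N M C)
      (b : Comparison C) :
      Step cut
        [(insert (.at i (α.dia (.nom j))) (insert (.at i (β.dia (.nom k))) Γ),
          insert (.at i (b.node α β)) (insert (b.node (.nom j) (.nom k)) Δ))]
        (insert (.at i (α.dia (.nom j))) (insert (.at i (β.dia (.nom k))) Γ),
          insert (.at i (b.node α β)) Δ)
  | eqT {Γ Δ : Set (Node P N M C)} (i : N) (c : C) :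
      Step cut [(insert (.eq (.nom i) c (.nom i)) Γ, Δ)] (Γ, Δ)
  | eq5 {Γ Δ : Set (Node P N M C)} (i j k : N) (c : C) :
      Step cut
        [(insert (.eq (.nom j) c (.nom k))
            (insert (.eq (.nom i) c (.nom j)) (insert (.eq (.nom i) c (.nom k)) Γ)), Δ)]
        (insert (.eq (.nom i) c (.nom j)) (insert (.eq (.nom i) c (.nom k)) Γ), Δ)
  | neqL {Γ Δ : Set (Node P N M C)} (i j : N) (c : C) :
      Step cut [(Γ, insert (.eq (.nom i) c (.nom j)) Δ)]
        (insert (.neq (.nom i) c (.nom j)) Γ, Δ)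
  | neqR {Γ Δ : Set (Node P N M C)} (i j : N) (c : C) :
      Step cut [(insert (.eq (.nom i) c (.nom j)) Γ, Δ)]
        (Γ, insert (.neq (.nom i) c (.nom j)) Δ)
  | cutRule {Γ Δ Γ' Δ' : Set (Node P N M C)} (φ : Node P N M C)
      (ha : φ.Admissible) (hc : cut = true) :
      Step cut [(Γ, insert φ Δ), (insert φ Γ', Δ')] (Γ ∪ Γ', Δ ∪ Δ')
  | wl {Γ Δ : Set (Node P N M C)} (φ : Node P N M C) (ha : φ.Admissible) :
      Step cut [(Γ, Δ)] (insert φ Γ, Δ)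
  | wr {Γ Δ : Set (Node P N M C)} (φ : Node P N M C) (ha : φ.Admissible) :
      Step cut [(Γ, Δ)] (Γ, insert φ Δ)

/-- Derivability in G (`Deriv true`) resp. in G without (Cut) (`Deriv false`):
    a derivation built from the rules whose leaves are instances of the
    zero-premiss rules (Ax) or (⊥). -/
inductive Deriv (cut : Bool) : Sequent P N M C → Prop where
  | step {prems : List (Sequent P N M C)} {concl : Sequent P N M C}
      (h : Step cut prems concl) (ih : ∀ s ∈ prems, Deriv cut s) : Deriv cut concl

/-- Γ ⊢_G Δ : the sequent is provable in G. -/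
def ProvableG (Γ Δ : Set (Node P N M C)) : Prop := Deriv true (Γ, Δ)

/-- M ⊩ φ : global satisfaction. -/
def Model.satG (𝔐 : Model P N M C) (φ : Node P N M C) : Prop := ∀ n, 𝔐.sat φ n

/-- Validity of a sequent. -/
def ValidSeq (S : Sequent P N M C) : Prop :=
  ∀ 𝔐 : Model P N M C, (∀ γ ∈ S.1, 𝔐.satG γ) → ∃ δ ∈ S.2, 𝔐.satG δ

/-- Formulas of the basic hybrid logic H(@): no data comparisons. -/
def Node.IsHybrid : Node P N M C → Prop
  | .prop _ => True
  | .nom _ => True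
  | .bot => True
  | .impl φ ψ => φ.IsHybrid ∧ ψ.IsHybrid
  | .at _ φ => φ.IsHybrid
  | .dia _ φ => φ.IsHybrid
  | .eq _ _ _ => False
  | .neq _ _ _ => False

variable {P N M C : Type}

mutual
theorem Path.noms_finite : ∀ α : Path P N M C, α.noms.Finite
  | .mod _ => by simp [Path.noms]
  | .nom i => by simpa [Path.noms] using Set.finite_singleton i
  | .test φ => by simpa [Path.noms] using φ.noms_finite
  | .comp α β => by
      simpa [Path.noms] using (α.noms_finite).union (β.noms_finite)

theorem Node.noms_finite : ∀ φ : Node P N M C, φ.noms.Finite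
  | .prop _ => by simp [Node.noms]
  | .nom i => by simpa [Node.noms] using Set.finite_singleton i
  | .bot => by simp [Node.noms]
  | .impl φ ψ => by simpa [Node.noms] using (φ.noms_finite).union (ψ.noms_finite)
  | .at i φ => by simpa [Node.noms] using (φ.noms_finite).insert i
  | .dia _ φ => by simpa [Node.noms] using φ.noms_finite
  | .eq α _ β => by simpa [Node.noms] using (α.noms_finite).union (β.noms_finite)
  | .neq α _ β => by simpa [Node.noms] using (α.noms_finite).union (β.noms_finite)
end

theorem exists_fresh2 [Infinite N] (S : Set (Node P N M C)) (hS : S.Finite) :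
    ∃ j k : N, j ≠ k ∧ FreshIn j S ∧ FreshIn k S := by
  have hU : (⋃ φ ∈ S, Node.noms φ).Finite := hS.biUnion (fun φ _ => φ.noms_finite)
  obtain ⟨j, hj⟩ := (hU.infinite_compl).nonempty
  obtain ⟨k, hk⟩ := ((hU.insert j).infinite_compl).nonempty
  simp only [Set.mem_compl_iff, Set.mem_insert_iff, Set.mem_iUnion, not_or, not_exists] at hj hk
  exact ⟨j, k, fun h => hk.1 h.symm, fun φ hφ => by simpa using hj φ hφ,
    fun φ hφ => by simpa using hk.2 φ hφ⟩

theorem exists_fresh [Infinite N] (S : Set (Node P N M C)) (hS : S.Finite) :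
    ∃ j : N, FreshIn j S := by
  obtain ⟨j, _, _, hj, _⟩ := exists_fresh2 S hS
  exact ⟨j, hj⟩
theorem cmpIdent {cut : Bool} (b : Comparison C) (j k : N) (Γ Δ : Set (Node P N M C)) :
    Deriv cut (insert (b.node (.nom j) (.nom k)) Γ, insert (b.node (.nom j) (.nom k)) Δ) := by
  cases b with
  | ceq c => exact Deriv.step (Step.ax (AxForm.eq j c k)) (by simp)
  | cneq c =>
    refine Deriv.step (Step.neqR (Γ := insert (.neq (.nom j) c (.nom k)) Γ) (Δ := Δ) j k c)
      (fun s hs => ?_)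
    simp only [List.mem_singleton] at hs
    subst hs
    rw [Set.insert_comm]
    refine Deriv.step (Step.neqL (Γ := insert (.eq (.nom j) c (.nom k)) Γ) (Δ := Δ) j k c)
      (fun s hs => ?_)
    simp only [List.mem_singleton] at hs
    subst hs
    exact Deriv.step (Step.ax (AxForm.eq j c k)) (by simp)

theorem freshIn_union {j : N} {S T : Set (Node P N M C)} (h : FreshIn j (S ∪ T)) :
    FreshIn j S ∧ FreshIn j T :=
  ⟨fun φ hφ => h φ (Or.inl hφ), fun φ hφ => h φ (Or.inr hφ)⟩

theorem cmpCase {cut : Bool} [Infinite N] (b : Comparison C) (i : N) (α β : Path P N M C)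
    (Γ Δ : Set (Node P N M C)) (hΓ : Γ.Finite) (hΔ : Δ.Finite) :
    Deriv cut (insert (.at i (b.node α β)) Γ, insert (.at i (b.node α β)) Δ) := by
  set A : Node P N M C := .at i (b.node α β) with hA
  obtain ⟨j, k, hjk, hj, hk⟩ :=
    exists_fresh2 (insert A Γ ∪ insert A Δ) ((hΓ.insert A).union (hΔ.insert A))
  obtain ⟨hj1, hj2⟩ := freshIn_union hj
  obtain ⟨hk1, hk2⟩ := freshIn_union hk
  refine Deriv.step (Step.cmpL (Γ := Γ) (Δ := insert A Δ) i j k α β b hjk hj1 hj2 hk1 hk2)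
    (fun s hs => ?_)
  simp only [List.mem_singleton] at hs
  subst hs
  refine Deriv.step
    (Step.cmpR (Γ := insert (b.node (.nom j) (.nom k)) Γ) (Δ := Δ) i j k α β b)
    (fun s hs => ?_)
  simp only [List.mem_singleton] at hs
  subst hs
  rw [Set.insert_comm (Node.at i (α.dia (.nom j))),
      Set.insert_comm (Node.at i (α.dia (.nom j))),
      Set.insert_comm (Node.at i (β.dia (.nom k))),
      Set.insert_comm A]
  exact cmpIdent b j k _ _

theorem ident {cut : Bool} [Infinite N] : ∀ (φ : Node P N M C) (i : N)
    (Γ Δ : Set (Node P N M C)), Γ.Finite → Δ.Finite →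
    Deriv cut (insert (.at i φ) Γ, insert (.at i φ) Δ)
  | .prop p, i, Γ, Δ, _, _ => Deriv.step (Step.ax (AxForm.prop i p)) (by simp)
  | .nom j, i, Γ, Δ, _, _ => Deriv.step (Step.ax (AxForm.nom i j)) (by simp)
  | .bot, i, Γ, Δ, _, _ =>
      Deriv.step (Step.bot (Γ := Γ) (Δ := insert (.at i .bot) Δ) i) (by simp)
  | .impl φ ψ, i, Γ, Δ, hΓ, hΔ => by
      refine Deriv.step (Step.implR (Γ := insert (.at i (.impl φ ψ)) Γ) (Δ := Δ) i φ ψ)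
        (fun s hs => ?_)
      simp only [List.mem_singleton] at hs
      subst hs
      rw [Set.insert_comm]
      refine Deriv.step (Step.implL (Γ := insert (.at i φ) Γ) (Δ := insert (.at i ψ) Δ) i φ ψ)
        (fun s hs => ?_)
      simp only [List.mem_cons, List.not_mem_nil, or_false] at hs
      rcases hs with hs | hs <;> subst hs
      · exact ident φ i Γ (insert (.at i ψ) Δ) hΓ (hΔ.insert _)
      · exact ident ψ i (insert (.at i φ) Γ) Δ (hΓ.insert _) hΔ
  | .at k ψ, i, Γ, Δ, hΓ, hΔ => by
      refine Deriv.step (Step.atL (Γ := Γ) (Δ := insert (.at i (.at k ψ)) Δ) k i ψ)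
        (fun s hs => ?_)
      simp only [List.mem_singleton] at hs
      subst hs
      refine Deriv.step (Step.atR (Γ := insert (.at k ψ) Γ) (Δ := Δ) k i ψ)
        (fun s hs => ?_)
      simp only [List.mem_singleton] at hs
      subst hs
      exact ident ψ k Γ Δ hΓ hΔ
  | .dia a ψ, i, Γ, Δ, hΓ, hΔ => by
      set A : Node P N M C := .at i (.dia a ψ) with hA
      obtain ⟨j, hj⟩ :=
        exists_fresh (insert A Γ ∪ insert A Δ) ((hΓ.insert A).union (hΔ.insert A))
      obtain ⟨hj1, hj2⟩ := freshIn_union hj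
      refine Deriv.step (Step.diaL (Γ := Γ) (Δ := insert A Δ) i j a ψ hj1 hj2)
        (fun s hs => ?_)
      simp only [List.mem_singleton] at hs
      subst hs
      refine Deriv.step (Step.diaR (Γ := insert (.at j ψ) Γ) (Δ := Δ) i j a ψ)
        (fun s hs => ?_)
      simp only [List.mem_singleton] at hs
      subst hs
      rw [Set.insert_comm (Node.at i (.dia a (.nom j))), Set.insert_comm A]
      exact ident ψ j (insert (.at i (.dia a (.nom j))) Γ) (insert A Δ) (hΓ.insert _)
        (hΔ.insert _)
  | .eq α c β, i, Γ, Δ, hΓ, hΔ => cmpCase (Comparison.ceq c) i α β Γ Δ hΓ hΔ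
  | .neq α c β, i, Γ, Δ, hΓ, hΔ => cmpCase (Comparison.cneq c) i α β Γ Δ hΓ hΔ

/-- invertibility of (⟨a⟩L). -/
theorem diaL_invertible {P N M C : Type} [Countable P] [Infinite P] [Countable N] [Infinite N] [Finite M] [Finite C]
    (i j : N) (a : M) (φ : Node P N M C) {Γ Δ : Set (Node P N M C)}
    (hGfin : Γ.Finite) (hDfin : Δ.Finite)
    (hGadm : ∀ ψ ∈ Γ, ψ.Admissible) (hDadm : ∀ ψ ∈ Δ, ψ.Admissible)
    (h : ProvableG (insert (.at i (.dia a φ)) Γ) Δ) :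
    ProvableG (insert (.at i (.dia a (.nom j))) (insert (.at j φ) Γ)) Δ := by
  set x : Node P N M C := .at i (.dia a (.nom j)) with hx
  set y : Node P N M C := .at j φ with hy
  set A : Node P N M C := .at i (.dia a φ) with hA
  have hconcl : (insert x (insert y Γ), Δ) =
      (({x, y} : Set (Node P N M C)) ∪ Γ, (∅ : Set (Node P N M C)) ∪ Δ) := by
    simp [Set.insert_union]
  unfold ProvableG
  rw [hconcl]
  refine Deriv.step
    (Step.cutRule (Γ := {x, y}) (Δ := ∅) (Γ' := Γ) (Δ' := Δ) A trivial rfl)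
    (fun s hs => ?_)
  simp only [List.mem_cons, List.not_mem_nil, or_false] at hs
  rcases hs with hs | hs <;> subst hs
  · -- ({x, y}, {A}) : @_i⟨a⟩j, @_jφ ⊢ @_i⟨a⟩φ
    have : (({x, y} : Set (Node P N M C)), insert A (∅ : Set (Node P N M C))) =
        (insert x ({y} : Set (Node P N M C)), insert A (∅ : Set (Node P N M C))) := rfl
    rw [this]
    refine Deriv.step (Step.diaR (Γ := {y}) (Δ := ∅) i j a φ) (fun s hs => ?_)
    simp only [List.mem_cons, List.not_mem_nil, or_false] at hs
    subst hs
    have e1 : (insert x ({y} : Set (Node P N M C))) = insert y ({x} : Set (Node P N M C)) := by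
      rw [hx, hy]; exact Set.pair_comm _ _
    have e2 : (insert A (insert y (∅ : Set (Node P N M C)))) =
        insert y ({A} : Set (Node P N M C)) := by
      rw [Set.insert_comm]; simp
    rw [e1, e2, hy]
    exact ident φ j {x} {A} (Set.finite_singleton _) (Set.finite_singleton _)
  · exact h

end HXPathD
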